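/- arXiv:2405.12108 — 2 statements merged into one kernel-verified Lean document; each statement's English description precedes it below -/
import Mathlib

section
/- Let d ≥ 1 and let v : ℝ^d → ℝ^d be twice continuously differentiable. Then the column-wise divergence of the adjugate of the Jacobian matrix of v vanishes identically: for every x ∈ ℝ^d and every index k ∈ {1,…,d}, one has ∑_{j=1}^d ∂_{x_j} [adj(Dv(x))]_{jk} = 0 (the Piola identity). -/
open Matrix

/-!
Write `adj(A)_{jk} = det(A with row k replaced by e_j)`. Differentiating in `x_j` row by row, the
`k`-th row is constant, and row `i ≠ k` (the gradient of `v_i`) contributes the determinant with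
rows `e_j` at `k` and `∂_j ∇v_i = ∑_b (∂_j ∂_b v_i) e_b` at `i`. Summed over `j`, this pairs the
Hessian of `v_i`, which is symmetric, with a determinant that is antisymmetric in `(j, b)`
because it swaps two rows; the sum vanishes.
-/

/-- The partial derivative `∂_{x_j} f (x)` of a scalar function on `ℝ^d`. -/
noncomputable def pderiv' {d : ℕ} (j : Fin d) (f : (Fin d → ℝ) → ℝ) (x : Fin d → ℝ) : ℝ :=
  fderiv ℝ f x (Pi.single j 1)

/-- The Jacobian matrix `(Dv(x))_{ij} = ∂_{x_j} v_i(x)` of a map `v : ℝ^d → ℝ^d`. -/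
noncomputable def jacobian {d : ℕ} (v : (Fin d → ℝ) → (Fin d → ℝ)) (x : Fin d → ℝ) :
    Matrix (Fin d) (Fin d) ℝ :=
  Matrix.of fun i j => pderiv' j (fun y => v y i) x

theorem Finset.sum_sum_mul_eq_zero_of_symm_of_antisymm {ι R : Type*} [Fintype ι] [Ring R]
    [IsAddTorsionFree R] (c T : ι → ι → R) (hc : ∀ j b, c j b = c b j)
    (hT : ∀ j b, T b j = -T j b) :
    ∑ j, ∑ b, c j b * T j b = 0 := by
  refine self_eq_neg.mp ?_
  calc ∑ j, ∑ b, c j b * T j b = ∑ b, ∑ j, c j b * T j b := Finset.sum_comm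
    _ = -∑ b, ∑ j, c b j * T b j := by
        simp only [← Finset.sum_neg_distrib]
        exact Finset.sum_congr rfl fun b _ => Finset.sum_congr rfl fun j _ => by
          rw [hc, hT, mul_neg]

namespace Matrix

section

variable {n R : Type*} [Fintype n] [DecidableEq n] [CommRing R]

theorem det_updateRow_finset_sum {ι : Type*} (A : Matrix n n R) (i : n) (s : Finset ι)
    (u : ι → n → R) :
    (A.updateRow i (∑ b ∈ s, u b)).det = ∑ b ∈ s, (A.updateRow i (u b)).det :=
  map_sum (detRowAlternating.toMultilinearMap.toLinearMap A i) u s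

theorem det_updateRow_updateRow_comm {A : Matrix n n R} {i k : n} (hik : i ≠ k) (u w : n → R) :
    ((A.updateRow k u).updateRow i w).det = -((A.updateRow k w).updateRow i u).det := by
  have hswap : (A.updateRow k u).updateRow i w
      = ((A.updateRow k w).updateRow i u).submatrix (Equiv.swap i k) id := by
    ext a b
    rcases eq_or_ne a i with rfl | hai
    · simp [updateRow_apply, Ne.symm hik]
    rcases eq_or_ne a k with rfl | hak
    · simp [updateRow_apply, hai]
    · simp [updateRow_apply, Equiv.swap_apply_of_ne_of_ne hai hak, hai, hak]
  rw [hswap, det_permute, Equiv.Perm.sign_swap hik]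
  simp

theorem sum_det_updateRow_updateRow_single_eq_zero [IsAddTorsionFree R] (A : Matrix n n R)
    {i k : n} (hik : i ≠ k) {H : Matrix n n R} (hH : H.IsSymm) :
    ∑ j, ((A.updateRow k (Pi.single j 1)).updateRow i (H j)).det = 0 := by
  have hrow : ∀ j, H j = ∑ b, H j b • Pi.single b 1 := fun j => by
    simpa using ((Pi.basisFun R n).sum_repr (H j)).symm
  calc ∑ j, ((A.updateRow k (Pi.single j 1)).updateRow i (H j)).det
      = ∑ j, ∑ b, H j b * ((A.updateRow k (Pi.single j 1)).updateRow i (Pi.single b 1)).det := by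
        refine Finset.sum_congr rfl fun j _ => ?_
        conv_lhs => rw [hrow j]
        simp only [det_updateRow_finset_sum, det_updateRow_smul]
    _ = 0 := Finset.sum_sum_mul_eq_zero_of_symm_of_antisymm _ _ (fun j b => hH.apply b j)
        fun j b => det_updateRow_updateRow_comm hik _ _

end

section

variable {𝕜 : Type*} [NontriviallyNormedField 𝕜] {n : Type*} [DecidableEq n]
  {E : Type*} [NormedAddCommGroup E] [NormedSpace 𝕜 E]
  {M : E → Matrix n n 𝕜} {M' : n → E →L[𝕜] (n → 𝕜)} {x : E}

theorem fderiv_det_apply_of_hasFDerivAt_row [Fintype n]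
    (hM : ∀ i, HasFDerivAt (fun y => M y i) (M' i) x) (u : E) :
    fderiv 𝕜 (fun y => (M y).det) x u = ∑ i, ((M x).updateRow i (M' i u)).det := by
  let D : ContinuousMultilinearMap 𝕜 (fun _ : n => n → 𝕜) 𝕜 :=
    { detRowAlternating.toMultilinearMap with
      cont := show Continuous fun A : Matrix n n 𝕜 => A.det by fun_prop }
  change fderiv 𝕜 (fun y => D fun i => M y i) x u = _
  rw [(HasFDerivAt.multilinear_comp D hM).fderiv, _root_.sum_apply]
  rfl

theorem hasFDerivAt_updateRow_row (hM : ∀ i, HasFDerivAt (fun y => M y i) (M' i) x)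
    (k : n) (c : n → 𝕜) (i : n) :
    HasFDerivAt (fun y => (M y).updateRow k c i) (Function.update M' k 0 i) x := by
  rcases eq_or_ne i k with rfl | hik
  · simpa using hasFDerivAt_const (𝕜 := 𝕜) c x
  · simpa [updateRow_ne hik, hik] using hM i

end

end Matrix

theorem exists_isSymm_hasFDerivAt_jacobian_row {d : ℕ} {v : (Fin d → ℝ) → (Fin d → ℝ)}
    (hv : ContDiff ℝ 2 v) (x : Fin d → ℝ) :
    ∃ L : Fin d → ((Fin d → ℝ) →L[ℝ] (Fin d → ℝ)),
      (∀ i, HasFDerivAt (fun y => jacobian v y i) (L i) x) ∧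
      ∀ i, (Matrix.of fun j b => L i (Pi.single j 1) b).IsSymm := by
  have hvi : ∀ i, ContDiff ℝ 2 fun y => v y i := fun i => (contDiff_apply ℝ ℝ i).comp hv
  refine ⟨fun i => ContinuousLinearMap.pi fun b =>
    (ContinuousLinearMap.apply ℝ ℝ (Pi.single b 1)).comp (fderiv ℝ (fderiv ℝ fun y => v y i) x),
    fun i => ?_, fun i => ?_⟩
  · have hD : DifferentiableAt ℝ (fderiv ℝ fun y => v y i) x :=
      ((hvi i).fderiv_right one_add_one_eq_two.le).differentiable one_ne_zero x
    refine hasFDerivAt_pi.2 fun b => ?_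
    change HasFDerivAt (fun y => fderiv ℝ (fun z => v z i) y (Pi.single b 1)) _ x
    exact (ContinuousLinearMap.apply ℝ ℝ (Pi.single b 1)).hasFDerivAt.comp x hD.hasFDerivAt
  · exact Matrix.IsSymm.ext fun j b =>
      ((hvi i).contDiffAt.isSymmSndFDerivAt (by simp)) _ _

theorem piola_identity_general {d : ℕ} (v : (Fin d → ℝ) → (Fin d → ℝ))
    (hv : ContDiff ℝ 2 v) (x : Fin d → ℝ) (k : Fin d) :
    ∑ j : Fin d, pderiv' j (fun y => (jacobian v y).adjugate j k) x = 0 := by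
  obtain ⟨L, hL, hLsymm⟩ := exists_isSymm_hasFDerivAt_jacobian_row hv x
  calc ∑ j, pderiv' j (fun y => (jacobian v y).adjugate j k) x
      = ∑ j, ∑ i, (((jacobian v x).updateRow k (Pi.single j 1)).updateRow i
          (Function.update L k 0 i (Pi.single j 1))).det := by
        refine Finset.sum_congr rfl fun j _ => ?_
        simp only [pderiv', adjugate_apply]
        exact fderiv_det_apply_of_hasFDerivAt_row (hasFDerivAt_updateRow_row hL k _) _
    _ = ∑ i, ∑ j, (((jacobian v x).updateRow k (Pi.single j 1)).updateRow i
          (Function.update L k 0 i (Pi.single j 1))).det := Finset.sum_comm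
    _ = 0 := Finset.sum_eq_zero fun i _ => by
        rcases eq_or_ne i k with rfl | hik
        · simp [det_eq_zero_of_row_eq_zero i]
        · simp only [Function.update_of_ne hik]
          exact sum_det_updateRow_updateRow_single_eq_zero _ hik (hLsymm i)

/-- **Piola identity**: for a C² map `v : ℝ^d → ℝ^d`, the column-wise divergence of the
adjugate of the Jacobian matrix vanishes:
`∑_j ∂_{x_j} [adj(Dv(x))]_{jk} = 0` for every `x` and every `k`. -/
theorem piola_identity {d : ℕ} (hd : 1 ≤ d) (v : (Fin d → ℝ) → (Fin d → ℝ))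
    (hv : ContDiff ℝ 2 v) (x : Fin d → ℝ) (k : Fin d) :
    ∑ j : Fin d, pderiv' j (fun y => (jacobian v y).adjugate j k) x = 0 :=
  piola_identity_general v hv x k
end

section
/- Let d ≥ 1 and let ψ : ℝ × ℝ^d → ℝ^d be twice continuously differentiable, with D_xψ(t,x) denoting the Jacobian matrix in the spatial variable. Then for every (t,x), ∂_t det(D_xψ(t,x)) = div_x( adj(D_xψ(t,x)) · ∂_tψ(t,x) ), i.e. the time derivative of the Jacobian determinant equals the spatial divergence of the vector field obtained by applying the adjugate of the spatial Jacobian to the time derivative of ψ (Jacobi's formula combined with the Piola identity). -/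
/-!
By Cramer's rule, `(adj(D_xψ) · ∂_tψ)_j` is the determinant of `D_xψ` with its `j`-th column
replaced by `∂_tψ`. Differentiating determinants column by column, the term of `∂_j` of this
determinant in which column `j` is differentiated is the `j`-th term of Jacobi's formula for
`∂_t det(D_xψ)` (as `∂_j∂_tψ = ∂_t∂_jψ`). Every other term has `∂_tψ` in column `j` and
`∂_j∂_lψ` in column `l`; since second derivatives are symmetric and the determinant is
alternating, the terms for `(j, l)` and `(l, j)` cancel.
-/

open Matrix

/-- The spatial Jacobian matrix `(D_xψ(t,x))_{ij} = ∂_{x_j} ψ_i(t,x)` of a map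
`ψ : ℝ × ℝ^d → ℝ^d`. -/
noncomputable def jacobianX {d : ℕ} (ψ : ℝ × (Fin d → ℝ) → (Fin d → ℝ)) (t : ℝ)
    (x : Fin d → ℝ) : Matrix (Fin d) (Fin d) ℝ :=
  Matrix.of fun i j => pderiv' j (fun y => ψ (t, y) i) x

open Function

noncomputable def Matrix.detRowContinuousAlternating (n R : Type*) [DecidableEq n] [Fintype n]
    [CommRing R] [TopologicalSpace R] [IsTopologicalRing R] : (n → R) [⋀^n]→L[R] R :=
  { detRowAlternating with cont := continuous_id.matrix_det }

theorem Matrix.adjugate_transpose_mulVec_apply {n R : Type*} [DecidableEq n] [Fintype n]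
    [CommRing R] (M : Matrix n n R) (b : n → R) (j : n) :
    (Mᵀ.adjugate *ᵥ b) j = (M.updateRow j b).det := by
  rw [← cramer_eq_adjugate_mulVec, cramer_apply, updateCol_transpose, det_transpose]

theorem AlternatingMap.map_update_update_add_swap {R M N ι : Type*} [Semiring R]
    [AddCommMonoid M] [Module R M] [AddCommGroup N] [Module R N] [DecidableEq ι]
    (g : M [⋀^ι]→ₗ[R] N) (c : ι → M) {j l : ι} (h : j ≠ l) (a b : M) :
    g (update (update c j a) l b) + g (update (update c l a) j b) = 0 := by
  convert g.map_add_swap (update (update c j a) l b) h using 3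
  rw [Equiv.comp_swap_eq_update, update_self, update_of_ne h, update_self, update_idem,
    update_comm h, update_idem]

theorem Finset.sum_sum_erase_eq_zero {ι M : Type*} [Fintype ι] [DecidableEq ι] [AddCommMonoid M]
    (T : ι → ι → M) (hT : ∀ j l, j ≠ l → T j l + T l j = 0) :
    ∑ j, ∑ l ∈ univ.erase j, T j l = 0 := by
  rw [sum_sigma']
  refine sum_involution (fun p _ ↦ ⟨p.2, p.1⟩) ?_ ?_ ?_ ?_
  · rintro ⟨j, l⟩ h
    exact hT j l (ne_of_mem_erase (mem_sigma.1 h).2).symm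
  · rintro ⟨j, l⟩ h _ hswap
    exact ne_of_mem_erase (mem_sigma.1 h).2 (congrArg Sigma.fst hswap)
  · rintro ⟨j, l⟩ h
    simpa [eq_comm] using ne_of_mem_erase (mem_sigma.1 h).2
  · rintro ⟨j, l⟩ _
    rfl

section PartialDerivatives

variable {𝕜 E₁ E₂ F : Type*} [NontriviallyNormedField 𝕜]
  [NormedAddCommGroup E₁] [NormedSpace 𝕜 E₁] [NormedAddCommGroup E₂] [NormedSpace 𝕜 E₂]
  [NormedAddCommGroup F] [NormedSpace 𝕜 F]

theorem fderiv_comp_prodMk_right_apply {g : E₁ × E₂ → F} {a : E₁} {b : E₂}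
    (hg : DifferentiableAt 𝕜 g (a, b)) (v : E₂) :
    fderiv 𝕜 (fun y ↦ g (a, y)) b v = fderiv 𝕜 g (a, b) (0, v) :=
  DFunLike.congr_fun (hg.hasFDerivAt.comp b (hasFDerivAt_prodMk_right a b)).fderiv v

theorem deriv_comp_prodMk_left {g : 𝕜 × E₂ → F} {s : 𝕜} {b : E₂}
    (hg : DifferentiableAt 𝕜 g (s, b)) :
    deriv (fun s ↦ g (s, b)) s = fderiv 𝕜 g (s, b) (1, 0) :=
  (hg.hasFDerivAt.comp s (hasFDerivAt_prodMk_left (𝕜 := 𝕜) s b)).hasDerivAt.deriv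

end PartialDerivatives

section Piola

variable {𝕜 E V F ι : Type*} [NontriviallyNormedField 𝕜]
  [NormedAddCommGroup E] [NormedSpace 𝕜 E] [NormedAddCommGroup V] [NormedSpace 𝕜 V]
  [NormedAddCommGroup F] [NormedSpace 𝕜 F] [Fintype ι] [DecidableEq ι]
  {Φ : E → V} {q : E}

theorem hasFDerivAt_continuousAlternatingMap_fderiv (f : V [⋀^ι]→L[𝕜] F) (u : ι → E)
    (hΦ : DifferentiableAt 𝕜 (fderiv 𝕜 Φ) q) :
    HasFDerivAt (fun q ↦ f fun l ↦ fderiv 𝕜 Φ q (u l))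
      ((f.1.linearDeriv fun l ↦ fderiv 𝕜 Φ q (u l)).comp
        (ContinuousLinearMap.pi fun l ↦
          (ContinuousLinearMap.apply 𝕜 V (u l)).comp (fderiv 𝕜 (fderiv 𝕜 Φ) q))) q :=
  (f.hasFDerivAt _).comp q <| hasFDerivAt_pi.2 fun l ↦
    (ContinuousLinearMap.apply 𝕜 V (u l)).hasFDerivAt.comp q hΦ.hasFDerivAt

theorem fderiv_continuousAlternatingMap_fderiv_apply (f : V [⋀^ι]→L[𝕜] F) (u : ι → E)
    (hΦ : DifferentiableAt 𝕜 (fderiv 𝕜 Φ) q) (w : E) :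
    fderiv 𝕜 (fun q ↦ f fun l ↦ fderiv 𝕜 Φ q (u l)) q w =
      ∑ l, f (update (fun l ↦ fderiv 𝕜 Φ q (u l)) l (fderiv 𝕜 (fderiv 𝕜 Φ) q w (u l))) := by
  rw [(hasFDerivAt_continuousAlternatingMap_fderiv f u hΦ).fderiv,
    ContinuousLinearMap.comp_apply, ContinuousMultilinearMap.linearDeriv_apply]
  rfl

theorem fderiv_continuousAlternatingMap_fderiv_eq_sum (f : V [⋀^ι]→L[𝕜] F) (e : ι → E) (e₀ : E)
    (hΦ : DifferentiableAt 𝕜 (fderiv 𝕜 Φ) q) (hsymm : IsSymmSndFDerivAt 𝕜 Φ q) :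
    fderiv 𝕜 (fun q ↦ f fun l ↦ fderiv 𝕜 Φ q (e l)) q e₀ =
      ∑ j, fderiv 𝕜 (fun q ↦ f fun l ↦ fderiv 𝕜 Φ q (update e j e₀ l)) q (e j) := by
  set D := fderiv 𝕜 Φ q
  set D₂ := fderiv 𝕜 (fderiv 𝕜 Φ) q
  have hcols (j : ι) : (fun l ↦ D (update e j e₀ l)) = update (fun l ↦ D (e l)) j (D e₀) :=
    comp_update D e j e₀
  have hsplit (j : ι) :
      fderiv 𝕜 (fun q ↦ f fun l ↦ fderiv 𝕜 Φ q (update e j e₀ l)) q (e j) =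
        f (update (fun l ↦ D (e l)) j (D₂ e₀ (e j))) +
          ∑ l ∈ Finset.univ.erase j,
            f (update (update (fun l ↦ D (e l)) j (D e₀)) l (D₂ (e j) (e l))) := by
    rw [fderiv_continuousAlternatingMap_fderiv_apply f _ hΦ, hcols,
      ← Finset.add_sum_erase _ _ (Finset.mem_univ j), update_idem, update_self, hsymm.eq]
    congr 1
    refine Finset.sum_congr rfl fun l hl ↦ ?_
    rw [update_of_ne (Finset.ne_of_mem_erase hl)]
  rw [Finset.sum_congr rfl fun j _ ↦ hsplit j, Finset.sum_add_distrib,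
    Finset.sum_sum_erase_eq_zero, add_zero, fderiv_continuousAlternatingMap_fderiv_apply f _ hΦ]
  intro j l hjl
  rw [hsymm.eq (e l)]
  exact f.toAlternatingMap.map_update_update_add_swap _ hjl _ _

end Piola

section Jacobian

variable {d : ℕ} {ψ : ℝ × (Fin d → ℝ) → (Fin d → ℝ)}

theorem jacobianX_eq_transpose {s : ℝ} {y : Fin d → ℝ} (hψ : DifferentiableAt ℝ ψ (s, y)) :
    jacobianX ψ s y = (of fun l ↦ fderiv ℝ ψ (s, y) (0, Pi.single l 1))ᵀ := by
  ext i j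
  rw [jacobianX, of_apply, pderiv', fderiv_comp_prodMk_right_apply (differentiableAt_pi.1 hψ i),
    fderiv_apply hψ]
  rfl

theorem det_jacobianX {s : ℝ} {y : Fin d → ℝ} (hψ : DifferentiableAt ℝ ψ (s, y)) :
    (jacobianX ψ s y).det =
      detRowContinuousAlternating (Fin d) ℝ fun l ↦ fderiv ℝ ψ (s, y) (0, Pi.single l 1) := by
  rw [jacobianX_eq_transpose hψ, det_transpose]
  rfl

theorem adjugate_jacobianX_mulVec_deriv_apply {t : ℝ} {y : Fin d → ℝ}
    (hψ : DifferentiableAt ℝ ψ (t, y)) (j : Fin d) :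
    ((jacobianX ψ t y).adjugate *ᵥ fun i ↦ deriv (fun s ↦ ψ (s, y) i) t) j =
      detRowContinuousAlternating (Fin d) ℝ fun l ↦
        fderiv ℝ ψ (t, y) (update (fun l ↦ ((0 : ℝ), (Pi.single l 1 : Fin d → ℝ))) j (1, 0) l) := by
  have hvel : (fun i ↦ deriv (fun s ↦ ψ (s, y) i) t) = fderiv ℝ ψ (t, y) (1, 0) := by
    ext i
    rw [deriv_comp_prodMk_left (differentiableAt_pi.1 hψ i), fderiv_apply hψ]
    rfl
  rw [jacobianX_eq_transpose hψ, adjugate_transpose_mulVec_apply, hvel]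
  exact congrArg _ (comp_update (fderiv ℝ ψ (t, y)) _ j (1, 0)).symm

end Jacobian

theorem jacobi_piola_general {d : ℕ} (ψ : ℝ × (Fin d → ℝ) → (Fin d → ℝ))
    (hψ : ContDiff ℝ 2 ψ) (t : ℝ) (x : Fin d → ℝ) :
    deriv (fun s => (jacobianX ψ s x).det) t =
      ∑ j : Fin d,
        pderiv' j
          (fun y => ((jacobianX ψ t y).adjugate *ᵥ fun i => deriv (fun s => ψ (s, y) i) t) j)
          x := by
  have hψ₁ : Differentiable ℝ ψ := hψ.differentiable (by norm_num)
  have hψ₂ : DifferentiableAt ℝ (fderiv ℝ ψ) (t, x) :=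
    (hψ.fderiv_right (m := 1) (by norm_num)).differentiable one_ne_zero _
  have hdiff (u : Fin d → ℝ × (Fin d → ℝ)) :=
    (hasFDerivAt_continuousAlternatingMap_fderiv (detRowContinuousAlternating (Fin d) ℝ) u
      hψ₂).differentiableAt
  simp only [det_jacobianX (hψ₁ _), adjugate_jacobianX_mulVec_deriv_apply (hψ₁ _)]
  rw [deriv_comp_prodMk_left (hdiff _), fderiv_continuousAlternatingMap_fderiv_eq_sum _ _ _ hψ₂
    (hψ.contDiffAt.isSymmSndFDerivAt (by simp))]
  exact Finset.sum_congr rfl fun j _ ↦ (fderiv_comp_prodMk_right_apply (hdiff _) _).symm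

/-- **Jacobi's formula combined with the Piola identity**: for a C² map
`ψ : ℝ × ℝ^d → ℝ^d`,
`∂_t det(D_xψ(t,x)) = div_x( adj(D_xψ(t,x)) · ∂_tψ(t,x) )`. -/
theorem jacobi_piola {d : ℕ} (hd : 1 ≤ d) (ψ : ℝ × (Fin d → ℝ) → (Fin d → ℝ))
    (hψ : ContDiff ℝ 2 ψ) (t : ℝ) (x : Fin d → ℝ) :
    deriv (fun s => (jacobianX ψ s x).det) t =
      ∑ j : Fin d,
        pderiv' j
          (fun y => ((jacobianX ψ t y).adjugate *ᵥ fun i => deriv (fun s => ψ (s, y) i) t) j)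
          x :=
  jacobi_piola_general ψ hψ t x
end
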